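/- arXiv:1103.4404 — 4 statements merged into one kernel-verified Lean document; each statement's English description precedes it below -/
import Mathlib

section
/- Let N₁ and N₂ be two nonzero Nijenhuis-type tensors on V = ℂ². Then there exists an invertible ℂ-linear map g : ℂ² → ℂ² such that N₂(x,y) = g⁻¹(N₁(g x, g y)) for all x, y ∈ ℂ². -/
open ComplexConjugate

/-- A Nijenhuis-type tensor on a complex vector space `V`: ℝ-bilinear (additive in each
argument), alternating, and conjugate-homogeneous in each argument over ℂ. -/
structure IsNijenhuisType {V : Type*} [AddCommGroup V] [Module ℂ V] (N : V → V → V) : Prop where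
  add_left : ∀ x y z : V, N (x + y) z = N x z + N y z
  add_right : ∀ x y z : V, N x (y + z) = N x y + N x z
  conj_smul_left : ∀ (c : ℂ) (x y : V), N (c • x) y = conj c • N x y
  conj_smul_right : ∀ (c : ℂ) (x y : V), N x (c • y) = conj c • N x y
  alt : ∀ x y : V, N x y = - N y x

/-!
A Nijenhuis-type tensor on `ℂ²` is determined by `v = N(e₁, e₂)`: expanding in the standard
basis gives `N(x, y) = conj(det(x, y)) • v`, where `det(x, y)` (`areaForm x y`) is the determinant
with columns `x`, `y`. Maps of determinant one preserve `det(x, y)` and act transitively on nonzero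
vectors, so if `g` has determinant one and `g v₂ = v₁`, then
`g⁻¹ N₁(g x, g y) = conj(det(x, y)) • g⁻¹ v₁ = N₂(x, y)`.
-/

section AreaForm

variable {R K : Type*} [CommRing R] [Field K]

def areaForm (x y : R × R) : R := x.1 * y.2 - x.2 * y.1

def unimodularEquiv (a b c d : R) (hdet : a * d - b * c = 1) : (R × R) ≃ₗ[R] (R × R) where
  toFun x := (a * x.1 + b * x.2, c * x.1 + d * x.2)
  invFun y := (d * y.1 - b * y.2, -(c * y.1) + a * y.2)
  map_add' x y := by ext <;> simp only [Prod.fst_add, Prod.snd_add] <;> ring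
  map_smul' r x := by ext <;> simp only [Prod.smul_fst, Prod.smul_snd, smul_eq_mul,
    RingHom.id_apply] <;> ring
  left_inv x := by
    ext
    · linear_combination x.1 * hdet
    · linear_combination x.2 * hdet
  right_inv y := by
    ext
    · linear_combination y.1 * hdet
    · linear_combination y.2 * hdet

theorem unimodularEquiv_apply (a b c d : R) (hdet : a * d - b * c = 1) (x : R × R) :
    unimodularEquiv a b c d hdet x = (a * x.1 + b * x.2, c * x.1 + d * x.2) :=
  rfl

theorem areaForm_unimodularEquiv (a b c d : R) (hdet : a * d - b * c = 1) (x y : R × R) :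
    areaForm (unimodularEquiv a b c d hdet x) (unimodularEquiv a b c d hdet y) = areaForm x y := by
  simp only [areaForm, unimodularEquiv_apply]
  linear_combination (x.1 * y.2 - x.2 * y.1) * hdet

theorem areaForm_symm_apply {g : (R × R) ≃ₗ[R] (R × R)}
    (hg : ∀ x y, areaForm (g x) (g y) = areaForm x y) (x y : R × R) :
    areaForm (g.symm x) (g.symm y) = areaForm x y := by
  rw [← hg, g.apply_symm_apply, g.apply_symm_apply]

theorem exists_areaForm_eq_one {u : K × K} (hu : u ≠ 0) : ∃ w : K × K, areaForm u w = 1 := by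
  rcases eq_or_ne u.1 0 with h1 | h1
  · have h2 : u.2 ≠ 0 := fun h2 => hu (Prod.ext h1 h2)
    exact ⟨(-u.2⁻¹, 0), by simp [areaForm, h2]⟩
  · exact ⟨(0, u.1⁻¹), by simp [areaForm, h1]⟩

theorem exists_areaForm_preserving_apply_fst_eq {u : K × K} (hu : u ≠ 0) :
    ∃ g : (K × K) ≃ₗ[K] (K × K), g (1, 0) = u ∧ ∀ x y, areaForm (g x) (g y) = areaForm x y := by
  obtain ⟨w, hw⟩ := exists_areaForm_eq_one hu
  have hdet : u.1 * w.2 - w.1 * u.2 = 1 := by rw [← hw, areaForm]; ring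
  refine ⟨unimodularEquiv u.1 w.1 u.2 w.2 hdet, ?_, areaForm_unimodularEquiv _ _ _ _ hdet⟩
  simp [unimodularEquiv_apply]

theorem exists_areaForm_preserving_apply_eq {v w : K × K} (hv : v ≠ 0) (hw : w ≠ 0) :
    ∃ g : (K × K) ≃ₗ[K] (K × K), g v = w ∧ ∀ x y, areaForm (g x) (g y) = areaForm x y := by
  obtain ⟨gv, hgv, hv_pres⟩ := exists_areaForm_preserving_apply_fst_eq hv
  obtain ⟨gw, hgw, hw_pres⟩ := exists_areaForm_preserving_apply_fst_eq hw
  refine ⟨gv.symm.trans gw, ?_, fun x y => ?_⟩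
  · rw [LinearEquiv.trans_apply, ← hgv, gv.symm_apply_apply, hgw]
  · simp only [LinearEquiv.trans_apply, hw_pres, areaForm_symm_apply hv_pres]

end AreaForm

namespace IsNijenhuisType

theorem apply_self {V : Type*} [AddCommGroup V] [Module ℂ V] {N : V → V → V}
    (h : IsNijenhuisType N) (x : V) : N x x = 0 := by
  have h2 : (2 : ℂ) • N x x = 0 := by
    rw [two_smul]
    nth_rewrite 1 [h.alt x x]
    exact neg_add_cancel _
  exact (smul_eq_zero.mp h2).resolve_left two_ne_zero

variable {N : ℂ × ℂ → ℂ × ℂ → ℂ × ℂ}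

theorem apply_eq_conj_areaForm_smul (h : IsNijenhuisType N) (x y : ℂ × ℂ) :
    N x y = conj (areaForm x y) • N (1, 0) (0, 1) := by
  have basis_expand : ∀ z : ℂ × ℂ, z = z.1 • ((1 : ℂ), (0 : ℂ)) + z.2 • ((0 : ℂ), (1 : ℂ)) := by
    intro z; ext <;> simp
  conv_lhs => rw [basis_expand x, basis_expand y]
  simp only [h.add_left, h.add_right, h.conj_smul_left, h.conj_smul_right, h.apply_self,
    h.alt ((0 : ℂ), (1 : ℂ)) ((1 : ℂ), (0 : ℂ)), areaForm, map_sub, map_mul]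
  module

theorem apply_basis_ne_zero (h : IsNijenhuisType N) (hN : N ≠ 0) : N (1, 0) (0, 1) ≠ 0 := by
  intro h0
  refine hN (funext₂ fun x y => ?_)
  rw [h.apply_eq_conj_areaForm_smul, h0, smul_zero, Pi.zero_apply, Pi.zero_apply]

end IsNijenhuisType

/-- any two nonzero Nijenhuis-type tensors on `ℂ²` are equivalent under
the action of `GL(2,ℂ)`: there is an invertible ℂ-linear `g` with
`N₂(x,y) = g⁻¹(N₁(g x, g y))`. -/
theorem stmt4 (N₁ N₂ : ℂ × ℂ → ℂ × ℂ → ℂ × ℂ)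
    (h₁ : IsNijenhuisType N₁) (h₂ : IsNijenhuisType N₂)
    (hn₁ : N₁ ≠ 0) (hn₂ : N₂ ≠ 0) :
    ∃ g : (ℂ × ℂ) ≃ₗ[ℂ] (ℂ × ℂ), ∀ x y : ℂ × ℂ, N₂ x y = g.symm (N₁ (g x) (g y)) := by
  obtain ⟨g, hg, hg_pres⟩ := exists_areaForm_preserving_apply_eq
    (h₂.apply_basis_ne_zero hn₂) (h₁.apply_basis_ne_zero hn₁)
  refine ⟨g, fun x y => ?_⟩
  rw [h₁.apply_eq_conj_areaForm_smul, hg_pres, map_smul, ← hg, g.symm_apply_apply,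
    h₂.apply_eq_conj_areaForm_smul]
end

section
/- For any α, β ∈ ℂ, set k = √(1 + |α|²) ∈ ℝ, a = i·k, and b = i·α·conj(β)/(1+k). Then the ℝ-linear map J : ℂ² → ℂ² defined by J(u,v) = (a·u + conj(α)·conj(u), b·u + conj(β)·conj(u) + i·v) satisfies J ∘ J = -id. -/
open ComplexConjugate

/-- The ℝ-linear endomorphism of `ℂ²` encoding the almost complex structure
`J∂_z = a∂_z + α∂_z̄ + b∂_w + β∂_w̄`, `J∂_w = i∂_w`. -/
noncomputable def Jstr (a α b β : ℂ) (q : ℂ × ℂ) : ℂ × ℂ :=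
  (a * q.1 + conj α * conj q.1, b * q.1 + conj β * conj q.1 + Complex.I * q.2)

/-!
Writing `J²` as a `ℂ`-linear expression in `u`, `ū` and `v`, the identity `J² = -id` amounts to
four scalar identities among the coefficients of `u` and `ū`. For `a = i k` with `k` real and
`k² = 1 + |α|²` the first two hold, the third forces `b = i α β̄ / (1 + k)`, and the fourth then
reduces to `|α|² + 1 - k² = 0`.
-/

open Complex

lemma Jstr_Jstr (a α b β : ℂ) (q : ℂ × ℂ) :
    Jstr a α b β (Jstr a α b β q) =
      ((a ^ 2 + α * conj α) * q.1 + conj α * (a + conj a) * conj q.1,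
        (b * (a + I) + α * conj β) * q.1 + (b * conj α + conj β * (conj a + I)) * conj q.1
          - q.2) := by
  simp only [Jstr, map_add, map_mul, conj_conj, Prod.mk.injEq]
  constructor
  · ring
  · linear_combination q.2 * I_sq

lemma Jstr_Jstr_eq_neg {a α b β : ℂ} (hsq : a ^ 2 + α * conj α = -1) (hre : conj a = -a)
    (hu : b * (a + I) = -(α * conj β)) (hubar : b * conj α + conj β * (conj a + I) = 0)
    (q : ℂ × ℂ) : Jstr a α b β (Jstr a α b β q) = -q := by
  rw [Jstr_Jstr, hsq, hu, hubar, hre]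
  ext <;> simp

lemma Jstr_normalForm_Jstr {k : ℝ} (α β : ℂ) (hk : 0 ≤ k) (hk2 : k ^ 2 = 1 + ‖α‖ ^ 2)
    (q : ℂ × ℂ) :
    Jstr (I * k) α (I * α * conj β / (1 + k)) β
      (Jstr (I * k) α (I * α * conj β / (1 + k)) β q) = -q := by
  have hk2' : (k : ℂ) ^ 2 = 1 + α * conj α := by
    rw [mul_conj, ← ofReal_pow, hk2, normSq_eq_norm_sq]
    push_cast; ring
  have hk1 : (1 : ℂ) + k ≠ 0 := by exact_mod_cast (by linarith : (1 : ℝ) + k ≠ 0)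
  apply Jstr_Jstr_eq_neg
  · linear_combination (-1 : ℂ) * hk2' + (k : ℂ) ^ 2 * I_sq
  · simp
  · field_simp
    linear_combination (α * conj β) * (1 + (k : ℂ)) * I_sq
  · simp only [map_mul, conj_I, conj_ofReal]
    field_simp
    linear_combination (-(I * conj β)) * hk2'

/-- for any `α, β ∈ ℂ`, with `k = √(1+|α|²)`, `a = i·k` and
`b = i·α·conj β/(1+k)`, the map `J` of the normal form of Lemma 1 satisfies `J∘J = -id`. -/
theorem stmt7 (α β : ℂ) :
    ∀ p : ℂ × ℂ,
      Jstr (Complex.I * (Real.sqrt (1 + ‖α‖ ^ 2) : ℂ)) α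
        (Complex.I * α * conj β / (1 + (Real.sqrt (1 + ‖α‖ ^ 2) : ℂ))) β
        (Jstr (Complex.I * (Real.sqrt (1 + ‖α‖ ^ 2) : ℂ)) α
          (Complex.I * α * conj β / (1 + (Real.sqrt (1 + ‖α‖ ^ 2) : ℂ))) β p)
      = -p :=
  Jstr_normalForm_Jstr α β (Real.sqrt_nonneg _) (Real.sq_sqrt (by positivity))
end

section
/- Let b : ℂ × ℂ → ℂ be defined by b(z,w) = exp(2πi·Re(w)), and for each p ∈ ℂ × ℂ define the ℝ-linear map J_p : ℂ² → ℂ² by J_p(u,v) = (i·u, i·v + conj(b(p))·conj(u)). Let E₁, E₂ : ℂ² → ℂ² be the constant vector fields E₁ ≡ (1,0), E₂ ≡ (0,1), and JX the vector field p ↦ J_p(X(p)). Then for every p, the Nijenhuis expression N(p) = [JE₁, JE₂](p) - J_p([E₁, JE₂](p)) - J_p([JE₁, E₂](p)) - [E₁,E₂](p) equals (0, 2π·conj(b(p))), which is nonzero. -/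
/-!
Since `JE₂ ≡ (0, i)` and `E₁, E₂` are constant, only the derivative of `JE₁ = (i, b̄)` enters the
Nijenhuis tensor, and `N(E₁, E₂) = (0, i · conj (∂b/∂(Re w)) - conj (∂b/∂(Im w)))`.
For `b = exp (2πi Re w)` the first derivative is `2πi b` and the second vanishes, giving `(0, 2π b̄)`.
-/

open ComplexConjugate

/-- The ℝ-linear map encoding the almost complex structure
`J∂_z = i∂_z + b∂_w̄`, `J∂_w = i∂_w` on `ℝ⁴ = ℂ²` at the point `p`. -/
noncomputable def Jb (b : ℂ × ℂ → ℂ) (p : ℂ × ℂ) (ξ : ℂ × ℂ) : ℂ × ℂ :=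
  (Complex.I * ξ.1, Complex.I * ξ.2 + conj (b p) * conj ξ.1)

noncomputable def vbracket (X Y : ℂ × ℂ → ℂ × ℂ) (p : ℂ × ℂ) : ℂ × ℂ :=
  fderiv ℝ Y p (X p) - fderiv ℝ X p (Y p)

/-- The Nijenhuis tensor `N(E₁, E₂)` of `J` on the coordinate fields `E₁ ≡ (1,0)`, `E₂ ≡ (0,1)`. -/
noncomputable def nijExpr (b : ℂ × ℂ → ℂ) (p : ℂ × ℂ) : ℂ × ℂ :=
  vbracket (fun q => Jb b q (1, 0)) (fun q => Jb b q (0, 1)) p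
    - Jb b p (vbracket (fun _ => (1, 0)) (fun q => Jb b q (0, 1)) p)
    - Jb b p (vbracket (fun q => Jb b q (1, 0)) (fun _ => (0, 1)) p)
    - vbracket (fun _ => (1, 0)) (fun _ => (0, 1)) p

open Complex Real

theorem vbracket_const_right (X : ℂ × ℂ → ℂ × ℂ) (v p : ℂ × ℂ) :
    vbracket X (fun _ => v) p = -fderiv ℝ X p v := by
  simp [vbracket]

theorem Jb_apply_zero_one (b : ℂ × ℂ → ℂ) (q : ℂ × ℂ) : Jb b q (0, 1) = (0, I) := by
  simp [Jb]

theorem Jb_apply_one_zero (b : ℂ × ℂ → ℂ) (q : ℂ × ℂ) : Jb b q (1, 0) = (I, conj (b q)) := by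
  simp [Jb]

theorem fderiv_Jb_one_zero_apply {b : ℂ × ℂ → ℂ} {p : ℂ × ℂ} (hb : DifferentiableAt ℝ b p)
    (v : ℂ × ℂ) : fderiv ℝ (fun q => Jb b q (1, 0)) p v = (0, conj (fderiv ℝ b p v)) := by
  have h : HasFDerivAt (fun q => (I, conj (b q))) _ p :=
    (hasFDerivAt_const I p).prodMk hb.hasFDerivAt.star
  rw [funext (Jb_apply_one_zero b), h.fderiv]
  simp

theorem nijExpr_eq {b : ℂ × ℂ → ℂ} {p : ℂ × ℂ} (hb : DifferentiableAt ℝ b p) :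
    nijExpr b p = (0, I * conj (fderiv ℝ b p (0, 1)) - conj (fderiv ℝ b p (0, I))) := by
  simp only [nijExpr, Jb_apply_zero_one, vbracket_const_right,
    fderiv_const_apply, fderiv_Jb_one_zero_apply hb]
  simp only [Jb]
  simp
  ring

theorem hasFDerivAt_cexp_mul_re_snd (c : ℂ) (p : ℂ × ℂ) :
    HasFDerivAt (fun q : ℂ × ℂ => exp (c * q.2.re))
      (exp (c * p.2.re) • c • (ofRealCLM ∘L reCLM ∘L ContinuousLinearMap.snd ℝ ℂ ℂ)) p :=
  ((ofRealCLM ∘L reCLM ∘L ContinuousLinearMap.snd ℝ ℂ ℂ).hasFDerivAt.const_mul c).cexp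

/-- for `b(z,w) = exp(2πi·Re w)` the Nijenhuis expression equals
`(0, 2π·conj(b(p)))`, which is nonzero (the torus example of a non-degenerate structure). -/
theorem stmt13 (b : ℂ × ℂ → ℂ)
    (hb : ∀ p : ℂ × ℂ, b p = Complex.exp (2 * (Real.pi : ℂ) * Complex.I * (p.2.re : ℂ))) :
    ∀ p : ℂ × ℂ,
      nijExpr b p = (0, 2 * (Real.pi : ℂ) * conj (b p)) ∧ nijExpr b p ≠ 0 := by
  intro p
  obtain rfl : b = fun q => exp (2 * (π : ℂ) * I * q.2.re) := funext hb
  have hderiv := hasFDerivAt_cexp_mul_re_snd (2 * (π : ℂ) * I) p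
  have hN : nijExpr (fun q => exp (2 * (π : ℂ) * I * q.2.re)) p
      = (0, 2 * (π : ℂ) * conj (exp (2 * (π : ℂ) * I * p.2.re))) := by
    rw [nijExpr_eq hderiv.differentiableAt, hderiv.fderiv]
    simp [map_ofNat]
    linear_combination (-2 * (π : ℂ) * conj (exp (2 * (π : ℂ) * I * p.2.re))) * I_mul_I
  refine ⟨hN, ?_⟩
  rw [hN]
  simp [Complex.exp_ne_zero]
end

section
/- Let A be a 3×3 complex matrix, let D = diag(1,-1,1), and for vectors x, y ∈ ℂ³ let x × y denote the cross product and star the entrywise complex conjugation. Then A satisfies the derivation identity D·star((A·x) × y) + D·star(x × (A·y)) = A·(D·star(x × y)) for all x, y ∈ ℂ³ if and only if A·D + D·Aᴴ = 0 and tr(A) = 0 (i.e. A lies in the special unitary algebra su(2,1) of the Hermitian form of signature (2,1) determined by D). -/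
/-!
For any `3 × 3` matrix `B`, `(B x) × y + x × (B y) = (tr B - Bᵀ)(x × y)`. Since the cross
products span `ℂ³`, the derivation identity for `N(x, y) = D · star (x × y)` is therefore the
matrix equation `A D + D Aᴴ = conj (tr A) · D`. For invertible `D`, conjugating by `D` and
taking traces gives `tr A + conj (tr A) = 3 conj (tr A)`, which forces `tr A = 0`.
-/

open Matrix

section CrossProduct

variable {R : Type*} [CommRing R]

theorem mulVec_cross_add_cross_mulVec (B : Matrix (Fin 3) (Fin 3) R) (x y : Fin 3 → R) :
    (B *ᵥ x) ⨯₃ y + x ⨯₃ (B *ᵥ y) = (x ⨯₃ y) ᵥ* (B.trace • 1 - B) := by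
  ext i
  fin_cases i <;>
    simp [cross_apply, mulVec, vecMul, dotProduct, Fin.sum_univ_three, trace, Matrix.sub_apply,
      one_apply] <;> ring

theorem exists_cross_eq_single (j : Fin 3) : ∃ x y : Fin 3 → R, x ⨯₃ y = Pi.single j 1 := by
  fin_cases j
  · exact ⟨Pi.single 1 1, Pi.single 2 1, by ext i; fin_cases i <;> simp [cross_apply]⟩
  · exact ⟨Pi.single 2 1, Pi.single 0 1, by ext i; fin_cases i <;> simp [cross_apply]⟩
  · exact ⟨Pi.single 0 1, Pi.single 1 1, by ext i; fin_cases i <;> simp [cross_apply]⟩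

variable [StarRing R]

theorem eq_of_mulVec_star_cross_eq {M N : Matrix (Fin 3) (Fin 3) R}
    (h : ∀ x y : Fin 3 → R, M *ᵥ star (x ⨯₃ y) = N *ᵥ star (x ⨯₃ y)) : M = N := by
  ext i j
  obtain ⟨x, y, hxy⟩ := exists_cross_eq_single (R := R) j
  simpa [hxy, Pi.star_single] using congrFun (h x y) i

theorem star_cross_derivation_iff (A D : Matrix (Fin 3) (Fin 3) R) :
    (∀ x y : Fin 3 → R, D *ᵥ star ((A *ᵥ x) ⨯₃ y) + D *ᵥ star (x ⨯₃ (A *ᵥ y))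
        = A *ᵥ D *ᵥ star (x ⨯₃ y)) ↔
      A * D + D * Aᴴ = star A.trace • D := by
  have hlhs : ∀ x y : Fin 3 → R, D *ᵥ star ((A *ᵥ x) ⨯₃ y) + D *ᵥ star (x ⨯₃ (A *ᵥ y))
      = (star A.trace • D - D * Aᴴ) *ᵥ star (x ⨯₃ y) := by
    intro x y
    rw [← mulVec_add, ← star_add, mulVec_cross_add_cross_mulVec, star_vecMul, mulVec_mulVec]
    simp [conjTranspose_sub, mul_sub]
  simp only [hlhs, mulVec_mulVec]
  refine ⟨fun h => ?_, fun h x y => ?_⟩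
  · rw [← eq_of_mulVec_star_cross_eq h]; abel
  · rw [← h]; congr 1; abel

end CrossProduct

theorem trace_eq_zero_of_mul_add_mul_conjTranspose_eq {A D : Matrix (Fin 3) (Fin 3) ℂ}
    (hD : IsUnit D) (h : A * D + D * Aᴴ = star A.trace • D) : A.trace = 0 := by
  have hdet := (isUnit_iff_isUnit_det D).mp hD
  have h' : A + D * Aᴴ * D⁻¹ = star A.trace • 1 := by
    simpa [add_mul, Matrix.mul_assoc, mul_nonsing_inv D hdet, smul_mul_assoc]
      using congrArg (· * D⁻¹) h
  have htr := congrArg trace h'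
  rw [trace_add, trace_mul_cycle, nonsing_inv_mul D hdet] at htr
  simp only [one_mul, trace_conjTranspose, RCLike.star_def, trace_smul, trace_one,
    Fintype.card_fin, Nat.cast_ofNat, smul_eq_mul] at htr
  apply Complex.ext <;> simp [Complex.ext_iff] at htr ⊢ <;> linarith [htr.1, htr.2]

/-- with `D = diag(1,-1,1)`, a 3×3 complex matrix `A` satisfies the derivation
identity `D·star((Ax) × y) + D·star(x × (Ay)) = A·(D·star(x × y))` for the tensor
`N(x,y) = D·star(x × y)` on `ℂ³` iff `A·D + D·Aᴴ = 0` and `tr A = 0`, i.e. `A ∈ su(2,1)`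
for the Hermitian form of signature `(2,1)` determined by `D`. -/
theorem stmt19 (A D : Matrix (Fin 3) (Fin 3) ℂ)
    (hD : D = Matrix.diagonal ![1, -1, 1]) :
    (∀ x y : Fin 3 → ℂ,
      D.mulVec (star (crossProduct (A.mulVec x) y))
        + D.mulVec (star (crossProduct x (A.mulVec y)))
        = A.mulVec (D.mulVec (star (crossProduct x y)))) ↔
    (A * D + D * Aᴴ = 0 ∧ A.trace = 0) := by
  have hD_unit : IsUnit D := by
    rw [hD, isUnit_iff_isUnit_det]
    simp [det_diagonal, Fin.prod_univ_three]
  rw [star_cross_derivation_iff]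
  constructor
  · intro h
    have htr := trace_eq_zero_of_mul_add_mul_conjTranspose_eq hD_unit h
    exact ⟨by simpa [htr] using h, htr⟩
  · rintro ⟨h, htr⟩
    simp [h, htr]
end
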